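/- The map Ŝ(x₁,x₂,y₁,y₂,z₁,z₂,t₁,t₂) = (x₁x₂y₁/(x₁x₂+y₂z₁), y₂, (x₁x₂+y₂z₁)/x₂, x₂z₂, y₁y₂z₁/(x₁x₂+y₂z₁), 1, t₁x₂/y₂, t₂z₂) is not involutive: there exists a point p ∈ ℂ⁸ (with all relevant denominators nonzero) such that Ŝ(Ŝ(p)) ≠ p; in fact the first component of Ŝ(Ŝ(x)) equals x₁(x₁x₂+y₂z₁)/(x₂(x₁+z₁z₂)), which generically differs from x₁. -/

import Mathlib

/-- The Hirota-type 4-simplex map `Ŝ` on `ℂ⁸`. -/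
noncomputable def hirotaShat :
    ℂ × ℂ × ℂ × ℂ × ℂ × ℂ × ℂ × ℂ → ℂ × ℂ × ℂ × ℂ × ℂ × ℂ × ℂ × ℂ :=
  fun (x1, x2, y1, y2, z1, z2, t1, t2) =>
    (x1 * x2 * y1 / (x1 * x2 + y2 * z1), y2,
     (x1 * x2 + y2 * z1) / x2, x2 * z2,
     y1 * y2 * z1 / (x1 * x2 + y2 * z1), 1,
     t1 * x2 / y2, t2 * z2)

/-- All denominators occurring in `Ŝ` are nonzero. -/
def hirotaShatOk : ℂ × ℂ × ℂ × ℂ × ℂ × ℂ × ℂ × ℂ → Prop :=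
  fun (x1, x2, _y1, y2, z1, _z2, _t1, _t2) =>
    x1 * x2 + y2 * z1 ≠ 0 ∧ x2 ≠ 0 ∧ y2 ≠ 0

/-!
Write `D = x₁x₂ + y₂z₁` and `(X₁, X₂, Y₁, Y₂, Z₁, …) = Ŝ(x)`. The product `X₁X₂Y₁` telescopes to
`x₁y₁y₂`, while the new denominator `X₁X₂ + Y₂Z₁` factors as `x₂y₁y₂(x₁ + z₁z₂)/D`. Dividing, the
first coordinate of `Ŝ(Ŝ(x))` is `x₁D / (x₂(x₁ + z₁z₂))`; at `x = (1, 1, 1, 1, 1, 2, 1, 1)` this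
is `2/3 ≠ 1`.
-/

def hirotaShatDenom : ℂ × ℂ × ℂ × ℂ × ℂ × ℂ × ℂ × ℂ → ℂ :=
  fun (x1, x2, _y1, y2, z1, _z2, _t1, _t2) => x1 * x2 + y2 * z1

section

variable {x1 x2 y1 y2 z1 z2 t1 t2 : ℂ}

theorem hirotaShatOk_iff (p : ℂ × ℂ × ℂ × ℂ × ℂ × ℂ × ℂ × ℂ) :
    hirotaShatOk p ↔ hirotaShatDenom p ≠ 0 ∧ p.2.1 ≠ 0 ∧ p.2.2.2.1 ≠ 0 :=
  Iff.rfl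

theorem hirotaShatDenom_hirotaShat :
    hirotaShatDenom (hirotaShat (x1, x2, y1, y2, z1, z2, t1, t2)) =
      x2 * y1 * y2 * (x1 + z1 * z2) / (x1 * x2 + y2 * z1) := by
  simp only [hirotaShatDenom, hirotaShat]
  ring

theorem hirotaShatOk_hirotaShat_iff (hp : hirotaShatOk (x1, x2, y1, y2, z1, z2, t1, t2)) :
    hirotaShatOk (hirotaShat (x1, x2, y1, y2, z1, z2, t1, t2)) ↔
      y1 ≠ 0 ∧ x1 + z1 * z2 ≠ 0 ∧ z2 ≠ 0 := by
  obtain ⟨hD, hx2, hy2⟩ := hp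
  rw [hirotaShatOk_iff, hirotaShatDenom_hirotaShat]
  simp only [hirotaShat, ne_eq, div_eq_zero_iff, mul_eq_zero, hD, hx2, hy2]
  tauto

theorem hirotaShat_hirotaShat_fst (hp : hirotaShatOk (x1, x2, y1, y2, z1, z2, t1, t2))
    (hq : hirotaShatOk (hirotaShat (x1, x2, y1, y2, z1, z2, t1, t2))) :
    (hirotaShat (hirotaShat (x1, x2, y1, y2, z1, z2, t1, t2))).1 =
      x1 * (x1 * x2 + y2 * z1) / (x2 * (x1 + z1 * z2)) := by
  obtain ⟨hy1, hs, -⟩ := (hirotaShatOk_hirotaShat_iff hp).mp hq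
  obtain ⟨hD, hx2, hy2⟩ := hp
  have hnum : (hirotaShat (x1, x2, y1, y2, z1, z2, t1, t2)).1 *
      (hirotaShat (x1, x2, y1, y2, z1, z2, t1, t2)).2.1 *
      (hirotaShat (x1, x2, y1, y2, z1, z2, t1, t2)).2.2.1 = x1 * y1 * y2 := by
    simp only [hirotaShat]
    field_simp
  calc (hirotaShat (hirotaShat (x1, x2, y1, y2, z1, z2, t1, t2))).1
      = x1 * y1 * y2 / hirotaShatDenom (hirotaShat (x1, x2, y1, y2, z1, z2, t1, t2)) := by
        rw [← hnum]; rfl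
    _ = x1 * (x1 * x2 + y2 * z1) / (x2 * (x1 + z1 * z2)) := by
        rw [hirotaShatDenom_hirotaShat]
        field_simp

end

/-- `Ŝ` is not involutive: wherever all denominators are nonzero, the first
component of `Ŝ(Ŝ(x))` equals `x₁(x₁x₂+y₂z₁)/(x₂(x₁+z₁z₂))`, and there is a
point `p` (with all relevant denominators nonzero) with `Ŝ(Ŝ(p)) ≠ p` in the
first coordinate. -/
theorem hirotaShat_noninvolutive :
    (∀ x1 x2 y1 y2 z1 z2 t1 t2 : ℂ,
      hirotaShatOk (x1, x2, y1, y2, z1, z2, t1, t2) →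
      hirotaShatOk (hirotaShat (x1, x2, y1, y2, z1, z2, t1, t2)) →
      (hirotaShat (hirotaShat (x1, x2, y1, y2, z1, z2, t1, t2))).1
        = x1 * (x1 * x2 + y2 * z1) / (x2 * (x1 + z1 * z2))) ∧
    ∃ p : ℂ × ℂ × ℂ × ℂ × ℂ × ℂ × ℂ × ℂ,
      hirotaShatOk p ∧ hirotaShatOk (hirotaShat p) ∧
      (hirotaShat (hirotaShat p)).1 ≠ p.1 := by
  refine ⟨fun _ _ _ _ _ _ _ _ => hirotaShat_hirotaShat_fst, ?_⟩
  have hp : hirotaShatOk (1, 1, 1, 1, 1, 2, 1, 1) := by norm_num [hirotaShatOk]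
  have hq : hirotaShatOk (hirotaShat (1, 1, 1, 1, 1, 2, 1, 1)) :=
    (hirotaShatOk_hirotaShat_iff hp).mpr (by norm_num)
  refine ⟨_, hp, hq, ?_⟩
  rw [hirotaShat_hirotaShat_fst hp hq]
  norm_num
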